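/- arXiv:2401.02057 — 2 statements merged into one kernel-verified Lean document; each statement's English description precedes it below -/
import Mathlib

section
/- Let p be a prime, m and d natural numbers, and let k = (k_1,…,k_d), k' = (k'_1,…,k'_d) ∈ ℕ^d with k'_i ≤ k_i for all i. Then the product ∏_{i=1}^{d} ⟨k_i choose k'_i⟩_{(m),q}, a priori an element of ℚ(q), lies in the subring ℤ[q]_{(p,q−1)}. -/
noncomputable section

open Polynomial

/-- `ℤ[q]`, the polynomial ring in one variable `q` over `ℤ`. -/
abbrev Zq : Type := Polynomial ℤ

/-- `ℚ(q)`, realized as the fraction field of `ℤ[q]`. -/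
abbrev Qq : Type := FractionRing Zq

/-- The canonical embedding `ℤ[q] → ℚ(q)`. -/
def ι : Zq →+* Qq := algebraMap Zq Qq

/-- The image of the variable `q` in `ℚ(q)`. -/
def qQ : Qq := ι X

/-- The `q^a`-integer `(n)_{q^a} = 1 + q^a + ⋯ + q^{a(n-1)}` in `ℤ[q]`. -/
def qInt (a n : ℕ) : Zq := ∑ j ∈ Finset.range n, X ^ (a * j)

/-- The `q^a`-factorial `(n)_{q^a}! = ∏_{i=1}^{n} (i)_{q^a}` in `ℤ[q]`. -/
def qFact (a n : ℕ) : Zq := ∏ i ∈ Finset.range n, qInt a (i + 1)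

/-- The prime ideal `(p, q - 1)` of `ℤ[q]`. -/
def pqIdeal (p : ℕ) : Ideal Zq := Ideal.span {C (p : ℤ), X - 1}

/-- Membership in the localization `ℤ[q]_{(p,q-1)}`, viewed inside `ℚ(q)`:
`x = a / b` with `b ∉ (p, q-1)`. -/
def InLoc (p : ℕ) (x : Qq) : Prop :=
  ∃ a b : Zq, b ∉ pqIdeal p ∧ x * ι b = ι a

/-- Being a unit of the localization `ℤ[q]_{(p,q-1)}`, viewed inside `ℚ(q)`:
`x = a / b` with `a, b ∉ (p, q-1)`. -/
def IsLocUnit (p : ℕ) (x : Qq) : Prop :=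
  ∃ a b : Zq, a ∉ pqIdeal p ∧ b ∉ pqIdeal p ∧ x * ι b = ι a

/-- The Gaussian `q`-binomial coefficient `(k choose k')_q` as an element of `ℚ(q)`. -/
def qBinomF (k k' : ℕ) : Qq :=
  ι (qFact 1 k) / (ι (qFact 1 k') * ι (qFact 1 (k - k')))

/-- The level-`m` coefficient `{k choose k'}_{(m),q}` as an element of `ℚ(q)`. -/
def braceC (p m k k' : ℕ) : Qq :=
  ι (qFact (p ^ m) (k / p ^ m)) /
    (ι (qFact (p ^ m) (k' / p ^ m)) * ι (qFact (p ^ m) ((k - k') / p ^ m)))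

/-- The level-`m` coefficient `⟨k choose k'⟩_{(m),q}` as an element of `ℚ(q)`. -/
def angleC (p m k k' : ℕ) : Qq := qBinomF k k' * (braceC p m k k')⁻¹

/-! Writing `a = p ^ j`, the `q^a`-factorial splits as
`(n)_{q^a}! = G(n) · (⌊n/p⌋)_{q^{ap}}! · ((p)_{q^a})^{⌊n/p⌋}`,
where `G(n)` is the product of the `(i)_{q^a}` with `1 ≤ i ≤ n` and `p ∤ i`. Since `(i)_{q^a}`
evaluates to `i` at `q = 1`, `G(n)` lies outside the prime `(p, q - 1)`. Hence the level-`j`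
coefficient `{k choose k'}` divided by the level-`(j+1)` one equals
`G(r) · (p)_{q^a}^e / (G(r') · G(r''))`, where `r, r', r''` are the level-`j` floors and
`e = ⌊r/p⌋ - ⌊r'/p⌋ - ⌊r''/p⌋ ≥ 0` because `r' + r'' ≤ r`; this lies in `ℤ[q]_{(p,q-1)}`.
At level `0` the coefficient `⟨k choose k'⟩` is `1`, and the claim follows by telescoping over
the levels. -/

lemma ι_ne_zero {f : Zq} (hf : f ≠ 0) : ι f ≠ 0 :=
  (map_ne_zero_iff ι (IsFractionRing.injective Zq Qq)).2 hf

section PrimeIdeal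

variable {p : ℕ}

def evalOneModP (p : ℕ) : Zq →+* ZMod p :=
  (Int.castRingHom (ZMod p)).comp (evalRingHom 1)

lemma pqIdeal_eq_ker (p : ℕ) : pqIdeal p = RingHom.ker (evalOneModP p) := by
  apply le_antisymm
  · rw [pqIdeal, Ideal.span_le]
    rintro g (rfl | rfl) <;> simp [evalOneModP]
  · intro f hf
    obtain ⟨t, ht⟩ := (ZMod.intCast_zmod_eq_zero_iff_dvd _ p).1 hf
    obtain ⟨g, hg⟩ := X_sub_C_dvd_sub_C_eval (a := (1 : ℤ)) (p := f)
    have hf : f = (X - 1) * g + C (p : ℤ) * C t := by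
      rw [← map_mul, ← ht, ← C_1, ← hg, coe_evalRingHom]; ring
    rw [hf, pqIdeal]
    exact Ideal.add_mem _ (Ideal.mul_mem_right _ _ (Ideal.subset_span (by simp)))
      (Ideal.mul_mem_right _ _ (Ideal.subset_span (by simp)))

lemma mem_pqIdeal_iff {f : Zq} : f ∈ pqIdeal p ↔ ((f.eval 1 : ℤ) : ZMod p) = 0 := by
  rw [pqIdeal_eq_ker, RingHom.mem_ker]
  rfl

lemma pqIdeal_isPrime (hp : p.Prime) : (pqIdeal p).IsPrime := by
  have := Fact.mk hp
  rw [pqIdeal_eq_ker]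
  exact RingHom.ker_isPrime _

lemma InLoc.one (hp : p.Prime) : InLoc p 1 :=
  ⟨1, 1, (pqIdeal_isPrime hp).one_notMem, by simp⟩

lemma InLoc.mul (hp : p.Prime) {x y : Qq} (hx : InLoc p x) (hy : InLoc p y) :
    InLoc p (x * y) := by
  obtain ⟨a, b, hb, hab⟩ := hx
  obtain ⟨c, d, hd, hcd⟩ := hy
  refine ⟨a * c, b * d, (pqIdeal_isPrime hp).mul_notMem hb hd, ?_⟩
  rw [map_mul, map_mul, ← hab, ← hcd]
  ring

lemma inLoc_div (a : Zq) {b : Zq} (hb : b ∉ pqIdeal p) : InLoc p (ι a / ι b) := by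
  have hb0 : b ≠ 0 := by rintro rfl; exact hb (zero_mem _)
  exact ⟨a, b, hb, div_mul_cancel₀ _ (ι_ne_zero hb0)⟩

end PrimeIdeal

section QFactorial

lemma qInt_eval_one (a n : ℕ) : (qInt a n).eval 1 = n := by
  simp [qInt, eval_finsetSum]

lemma qInt_ne_zero (a : ℕ) {n : ℕ} (hn : n ≠ 0) : qInt a n ≠ 0 := by
  intro h
  have := qInt_eval_one a n
  rw [h, eval_zero] at this
  exact hn (by exact_mod_cast this.symm)

lemma qFact_ne_zero (a n : ℕ) : qFact a n ≠ 0 :=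
  Finset.prod_ne_zero_iff.2 fun i _ ↦ qInt_ne_zero a i.succ_ne_zero

lemma qInt_notMem_pqIdeal {p : ℕ} (a : ℕ) {n : ℕ} (hn : ¬ p ∣ n) : qInt a n ∉ pqIdeal p := by
  rw [mem_pqIdeal_iff, qInt_eval_one, Int.cast_natCast, ZMod.natCast_eq_zero_iff]
  exact hn

lemma qInt_mul_X_pow_sub_one (a n : ℕ) : qInt a n * (X ^ a - 1) = X ^ (a * n) - 1 := by
  simp only [qInt, pow_mul]
  exact geom_sum_mul _ _

lemma qInt_mul (a p j : ℕ) : qInt a (p * j) = qInt (a * p) j * qInt a p := by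
  rcases Nat.eq_zero_or_pos a with rfl | ha
  · simp [qInt, mul_comm]
  have hX : (X ^ a - 1 : Zq) ≠ 0 := by
    intro h
    simpa [zero_pow ha.ne'] using congrArg (eval 0) h
  apply mul_right_cancel₀ hX
  rw [mul_assoc, qInt_mul_X_pow_sub_one a p, qInt_mul_X_pow_sub_one, qInt_mul_X_pow_sub_one,
    mul_assoc]

def qFactPrimeTo (p a n : ℕ) : Zq :=
  ∏ i ∈ Finset.range n, if p ∣ i + 1 then 1 else qInt a (i + 1)

lemma qFactPrimeTo_notMem_pqIdeal {p : ℕ} (hp : p.Prime) (a n : ℕ) :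
    qFactPrimeTo p a n ∉ pqIdeal p := by
  have := pqIdeal_isPrime hp
  rw [qFactPrimeTo, Ideal.IsPrime.prod_mem_iff]
  rintro ⟨i, -, hi⟩
  split_ifs at hi with h
  · exact this.one_notMem hi
  · exact qInt_notMem_pqIdeal a h hi

lemma qFact_succ (a n : ℕ) : qFact a (n + 1) = qFact a n * qInt a (n + 1) :=
  Finset.prod_range_succ _ _

lemma qFactPrimeTo_succ (p a n : ℕ) :
    qFactPrimeTo p a (n + 1) = qFactPrimeTo p a n * if p ∣ n + 1 then 1 else qInt a (n + 1) :=
  Finset.prod_range_succ _ _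

lemma qFact_eq_qFactPrimeTo_mul (p a n : ℕ) :
    qFact a n = qFactPrimeTo p a n * qFact (a * p) (n / p) * qInt a p ^ (n / p) := by
  induction n with
  | zero => simp [qFact, qFactPrimeTo]
  | succ n ih =>
    rw [qFact_succ, ih, qFactPrimeTo_succ, Nat.succ_div]
    split_ifs with h
    · have hn : n + 1 = p * (n / p + 1) := by
        rw [← Nat.succ_div_of_dvd h, Nat.mul_div_cancel' h]
      rw [qFact_succ, hn, qInt_mul]
      ring
    · rw [add_zero]
      ring

end QFactorial

section Levels

/-- `qBinomF` and `braceC` are both of this form. -/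
def qFactQuot (a r s t : ℕ) : Qq :=
  ι (qFact a r) / (ι (qFact a s) * ι (qFact a t))

lemma qFactQuot_ne_zero (a r s t : ℕ) : qFactQuot a r s t ≠ 0 :=
  div_ne_zero (ι_ne_zero (qFact_ne_zero _ _))
    (mul_ne_zero (ι_ne_zero (qFact_ne_zero _ _)) (ι_ne_zero (qFact_ne_zero _ _)))

lemma inLoc_qFactQuot_div_qFactQuot {p : ℕ} (hp : p.Prime) (a : ℕ) {r s t : ℕ} (h : s + t ≤ r) :
    InLoc p (qFactQuot a r s t / qFactQuot (a * p) (r / p) (s / p) (t / p)) := by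
  obtain ⟨e, he⟩ : ∃ e, r / p = s / p + t / p + e :=
    Nat.exists_eq_add_of_le (Nat.div_add_div_le_add_div.trans (Nat.div_le_div_right h))
  have hquot : qFactQuot a r s t / qFactQuot (a * p) (r / p) (s / p) (t / p) =
      ι (qFactPrimeTo p a r * qInt a p ^ e) / ι (qFactPrimeTo p a s * qFactPrimeTo p a t) := by
    have hG : ∀ n, ι (qFactPrimeTo p a n) ≠ 0 := fun n ↦ ι_ne_zero fun h0 ↦
      qFactPrimeTo_notMem_pqIdeal hp a n (h0 ▸ zero_mem _)
    have hF : ∀ b n, ι (qFact b n) ≠ 0 := fun b n ↦ ι_ne_zero (qFact_ne_zero b n)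
    have hP : ι (qInt a p) ≠ 0 := ι_ne_zero (qInt_ne_zero a hp.ne_zero)
    simp only [qFactQuot, qFact_eq_qFactPrimeTo_mul p a r, qFact_eq_qFactPrimeTo_mul p a s,
      qFact_eq_qFactPrimeTo_mul p a t, he, pow_add, map_mul, map_pow]
    field_simp [hF (a * p) (s / p), hF (a * p) (t / p), hF (a * p) (s / p + t / p + e),
      hG s, hG t, hP]
  rw [hquot]
  exact inLoc_div _ ((pqIdeal_isPrime hp).mul_notMem (qFactPrimeTo_notMem_pqIdeal hp a s)
    (qFactPrimeTo_notMem_pqIdeal hp a t))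

lemma braceC_succ (p m k k' : ℕ) :
    braceC p (m + 1) k k' =
      qFactQuot (p ^ m * p) (k / p ^ m / p) (k' / p ^ m / p) ((k - k') / p ^ m / p) := by
  simp only [braceC, qFactQuot, pow_succ, Nat.div_div_eq_div_mul]

lemma angleC_zero (p k k' : ℕ) : angleC p 0 k k' = 1 := by
  have hbrace : braceC p 0 k k' = qFactQuot 1 k k' (k - k') := by
    simp only [braceC, qFactQuot, pow_zero, Nat.div_one]
  rw [angleC, hbrace]
  exact mul_inv_cancel₀ (qFactQuot_ne_zero 1 k k' (k - k'))

lemma angleC_succ (p m k k' : ℕ) :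
    angleC p (m + 1) k k' = angleC p m k k' * (braceC p m k k' / braceC p (m + 1) k k') := by
  have hne : braceC p m k k' ≠ 0 := qFactQuot_ne_zero _ _ _ _
  rw [angleC, angleC, mul_assoc, div_eq_mul_inv (braceC p m k k'), inv_mul_cancel_left₀ hne]

lemma inLoc_angleC {p : ℕ} (hp : p.Prime) (m : ℕ) {k k' : ℕ} (h : k' ≤ k) :
    InLoc p (angleC p m k k') := by
  induction m with
  | zero => simpa [angleC_zero] using InLoc.one hp
  | succ m ih =>
    have hsum : k' / p ^ m + (k - k') / p ^ m ≤ k / p ^ m := by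
      simpa [Nat.add_sub_cancel' h] using
        Nat.div_add_div_le_add_div (x := k') (y := k - k') (z := p ^ m)
    rw [angleC_succ, braceC_succ]
    exact ih.mul hp (inLoc_qFactQuot_div_qFactQuot hp _ hsum)

end Levels

/-- For multi-indices `k' ≤ k`, the product of the level-`m` coefficients
`⟨k_i choose k'_i⟩_{(m),q}` lies in `ℤ[q]_{(p,q-1)}`. -/
theorem stmt2 (p : ℕ) (hp : p.Prime) (m d : ℕ) (k k' : Fin d → ℕ)
    (h : ∀ i, k' i ≤ k i) :
    InLoc p (∏ i, angleC p m (k i) (k' i)) :=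
  Finset.prod_induction _ (InLoc p) (fun _ _ ↦ InLoc.mul hp) (InLoc.one hp)
    fun i _ ↦ inLoc_angleC hp m (h i)
end
end

section
/- Let p be a prime and m ∈ ℕ. Let k, l, l'' be natural numbers with p^m dividing k, k ≥ p^m, and l < l'' ≤ p^m. Then in ℚ(q) the identity ⟨k choose p^m⟩_{(m),q} · ⟨p^m+l choose l''⟩_{(m),q} · ⟨k+l choose k⟩_{(m),q} = ⟨p^m+l choose l⟩_{(m),q} · ⟨k+l−l'' choose k−p^m⟩_{(m),q} · ⟨k+l choose l''⟩_{(m),q} holds. -/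
noncomputable section

open Polynomial

lemma iota_qFact_ne_zero (a n : ℕ) : ι (qFact a n) ≠ 0 := by
  have hinj : Function.Injective (ι : Zq →+* Qq) := IsFractionRing.injective Zq Qq
  simpa [map_eq_zero_iff ι hinj] using qFact_ne_zero a n

lemma qFact_zero' (a : ℕ) : qFact a 0 = 1 := by simp [qFact]

lemma qFact_one' (a : ℕ) : qFact a 1 = 1 := by simp [qFact, qInt]


lemma key_field {K : Type*} [Field K] (A B C D E F' G H I U V : K)
    (hB : B ≠ 0) (hC : C ≠ 0) (hE : E ≠ 0) (hF : F' ≠ 0) (hA : A ≠ 0)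
    (hH : H ≠ 0) (hI : I ≠ 0) (hU : U ≠ 0) (hV : V ≠ 0) :
    A / (B * C) * (U / V)⁻¹ * (D / (E * F')) * (G / (A * H)) =
      D / (H * B) * (I / (C * F')) * (G / (E * I) * (U / V)⁻¹) := by
  rw [inv_div]
  field_simp

/-- For `p^m ∣ k`, `k ≥ p^m` and `l < l'' ≤ p^m`:
`⟨k choose p^m⟩ ⬝ ⟨p^m+l choose l''⟩ ⬝ ⟨k+l choose k⟩
  = ⟨p^m+l choose l⟩ ⬝ ⟨k+l-l'' choose k-p^m⟩ ⬝ ⟨k+l choose l''⟩` (all level-`m`). -/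
theorem stmt16 (p : ℕ) (hp : p.Prime) (m k l l'' : ℕ) (hk : p ^ m ∣ k) (hk' : p ^ m ≤ k)
    (h1 : l < l'') (h2 : l'' ≤ p ^ m) :
    angleC p m k (p ^ m) * angleC p m (p ^ m + l) l'' * angleC p m (k + l) k =
      angleC p m (p ^ m + l) l * angleC p m (k + l - l'') (k - p ^ m) *
        angleC p m (k + l) l'' := by
  set P := p ^ m with hPdef
  have hP0 : 0 < P := pow_pos hp.pos m
  obtain ⟨c, rfl⟩ := hk
  have hc1 : 1 ≤ c := Nat.le_of_mul_le_mul_left (by simpa using hk') hP0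
  obtain ⟨d, rfl⟩ : ∃ d, c = d + 1 := ⟨c - 1, by omega⟩
  have hl : l < P := lt_of_lt_of_le h1 h2
  have dmul : ∀ n, P * n / P = n := fun n => Nat.mul_div_cancel_left n hP0
  have d2 : P / P = 1 := Nat.div_self hP0
  have e3 : P * (d + 1) - P = P * d := by rw [Nat.mul_succ, Nat.add_sub_cancel]
  have dl : l / P = 0 := Nat.div_eq_of_lt hl
  have d4 : (P + l) / P = 1 := by
    rw [Nat.add_comm, Nat.add_div_right _ hP0, dl]
  have d5 : (P + l - l'') / P = 0 := Nat.div_eq_of_lt (by omega)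
  have d6 : (P * (d + 1) + l) / P = d + 1 := by
    rw [Nat.mul_add_div hP0, dl]
  have e7 : P * (d + 1) + l - P * (d + 1) = l := by simp
  have e8 : P * (d + 1) + l - l'' = P * d + (P + l - l'') := by
    rw [Nat.mul_succ, add_assoc, Nat.add_sub_assoc (by omega : l'' ≤ P + l)]
  have d8 : (P * (d + 1) + l - l'') / P = d := by
    rw [e8, Nat.mul_add_div hP0, Nat.div_eq_of_lt (by omega : P + l - l'' < P), Nat.add_zero]
  have e10 : P * (d + 1) + l - l'' - P * d = P + l - l'' := by
    rw [e8, Nat.add_sub_cancel_left]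
  have d11 : P + l - l = P := by simp
  have hq : qFact P (l'' / P) = 1 := by
    rcases eq_or_lt_of_le h2 with h | h
    · rw [h, d2, qFact_one']
    · rw [Nat.div_eq_of_lt h, qFact_zero']
  have hne : ∀ a n : ℕ, ι (qFact a n) ≠ 0 := iota_qFact_ne_zero
  have hb1 : braceC p m (P * (d + 1)) P =
      ι (qFact P (d + 1)) / ι (qFact P d) := by
    rw [braceC, ← hPdef, dmul, d2, e3, dmul, qFact_one', map_one, one_mul]
  have hb2 : braceC p m (P + l) l'' = 1 := by
    rw [braceC, ← hPdef, d4, d5, hq, qFact_one', qFact_zero']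
    simp
  have hb3 : braceC p m (P * (d + 1) + l) (P * (d + 1)) = 1 := by
    rw [braceC, ← hPdef, d6, dmul, e7, dl, qFact_zero', map_one, mul_one]
    exact div_self (hne P (d + 1))
  have hb4 : braceC p m (P + l) l = 1 := by
    rw [braceC, ← hPdef, d4, dl, d11, d2, qFact_one', qFact_zero']
    simp
  have hb5 : braceC p m (P * (d + 1) + l - l'') (P * (d + 1) - P) = 1 := by
    rw [braceC, ← hPdef, d8, e3, dmul, e10, d5, qFact_zero', map_one, mul_one]
    exact div_self (hne P d)
  have hb6 : braceC p m (P * (d + 1) + l) l'' =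
      ι (qFact P (d + 1)) / ι (qFact P d) := by
    rw [braceC, ← hPdef, d6, hq, d8, map_one, one_mul]
  rw [angleC, angleC, angleC, angleC, angleC, angleC, hb1, hb2, hb3, hb4, hb5, hb6]
  simp only [inv_one, mul_one]
  rw [qBinomF, qBinomF, qBinomF, qBinomF, qBinomF, qBinomF, e3, e7, d11, e10]
  exact key_field _ _ _ _ _ _ _ _ _ _ _ (hne 1 P) (hne 1 (P * d)) (hne 1 l'')
    (hne 1 (P + l - l'')) (hne 1 (P * (d + 1))) (hne 1 l)
    (hne 1 (P * (d + 1) + l - l'')) (hne P (d + 1)) (hne P d)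
end
end
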